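/- arXiv:1701.05833 — 5 statements merged into one kernel-verified Lean document; each statement's English description precedes it below -/
import Mathlib

section
/- Let U : ℝᵈ → ℝ be differentiable with ∇U Lipschitz with constant L, J a matrix with operator norm ‖J‖, ξ ∈ {-1,1}, h > 0 with h‖J‖L/2 ≤ 1/2, and let x, χ ∈ ℝᵈ. If y ∈ ℝᵈ satisfies y + hξJ∇U((x+y)/2) = x - h∇U(x) + √(2h)·χ, then there exists a constant C > 0 depending only on L and ‖J‖ such that ‖y - x‖ ≤ C(h‖∇U(x)‖ + √h·‖χ‖). -/
theorem implicit_step_size_bound (d : ℕ) (L : NNReal)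
    (U : EuclideanSpace ℝ (Fin d) → ℝ) (hU : Differentiable ℝ U)
    (hLip : LipschitzWith L (gradient U))
    (J : EuclideanSpace ℝ (Fin d) →L[ℝ] EuclideanSpace ℝ (Fin d)) :
    ∃ C > 0, ∀ (ξ : ℝ), (ξ = 1 ∨ ξ = -1) →
      ∀ (h : ℝ), 0 < h → h * ‖J‖ * L / 2 ≤ 1 / 2 →
      ∀ (x χ y : EuclideanSpace ℝ (Fin d)),
        y + (h * ξ) • J (gradient U ((2 : ℝ)⁻¹ • (x + y)))
          = x - h • gradient U x + Real.sqrt (2 * h) • χ →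
        ‖y - x‖ ≤ C * (h * ‖gradient U x‖ + Real.sqrt h * ‖χ‖) := by
  refine ⟨2 * ‖J‖ + 4, by positivity, ?_⟩
  intro ξ hξ h hh hcond x χ y heq
  set gx := gradient U x with hgx
  set m := (2 : ℝ)⁻¹ • (x + y) with hm
  set g := gradient U m with hg
  set s := Real.sqrt (2 * h) with hs
  have habs : |ξ| = 1 := by rcases hξ with rfl | rfl <;> norm_num
  have hyx : y - x = -(h • gx) + (s • χ - (h * ξ) • J g) := by
    have h1 : y = x - h • gx + s • χ - (h * ξ) • J g := by
      rw [← heq]; abel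
    rw [h1]; abel
  -- norm of midpoint difference
  have hmx : m - x = (2 : ℝ)⁻¹ • (y - x) := by
    rw [hm]; module
  have hmxnorm : ‖m - x‖ = ‖y - x‖ / 2 := by
    rw [hmx, norm_smul]; simp; ring
  -- gradient bound at midpoint
  have hgbound : ‖g‖ ≤ ‖gx‖ + L * (‖y - x‖ / 2) := by
    have h2 : ‖g - gx‖ ≤ L * ‖m - x‖ := by
      have := hLip.dist_le_mul m x
      rwa [dist_eq_norm, dist_eq_norm] at this
    calc ‖g‖ = ‖gx + (g - gx)‖ := by rw [add_sub_cancel]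
      _ ≤ ‖gx‖ + ‖g - gx‖ := norm_add_le _ _
      _ ≤ ‖gx‖ + L * (‖y - x‖ / 2) := by rw [← hmxnorm]; linarith
  -- main triangle inequality
  have hJg : ‖(h * ξ) • J g‖ ≤ h * (‖J‖ * ‖g‖) := by
    rw [norm_smul, Real.norm_eq_abs, abs_mul, habs, mul_one, abs_of_pos hh]
    exact mul_le_mul_of_nonneg_left (J.le_opNorm g) hh.le
  have hmain : ‖y - x‖ ≤ h * ‖gx‖ + s * ‖χ‖ + h * (‖J‖ * ‖g‖) := by
    calc ‖y - x‖ ≤ ‖h • gx‖ + (‖s • χ‖ + ‖(h * ξ) • J g‖) := by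
          rw [hyx]
          refine (norm_add_le _ _).trans ?_
          gcongr
          · simp
          · exact norm_sub_le _ _
      _ ≤ h * ‖gx‖ + s * ‖χ‖ + h * (‖J‖ * ‖g‖) := by
          rw [norm_smul, norm_smul, Real.norm_eq_abs, Real.norm_eq_abs,
            abs_of_pos hh, abs_of_nonneg (Real.sqrt_nonneg _)]
          linarith
  -- sqrt(2h) ≤ 2 sqrt h
  have hsqrt : s ≤ 2 * Real.sqrt h := by
    rw [hs, Real.sqrt_mul (by norm_num : (0:ℝ) ≤ 2)]
    have h2 : Real.sqrt 2 ≤ 2 := by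
      nlinarith [Real.sq_sqrt (by norm_num : (0:ℝ) ≤ 2), Real.sqrt_nonneg 2]
    have := Real.sqrt_nonneg h
    nlinarith
  have hLnn : (0:ℝ) ≤ L := L.coe_nonneg
  have hJn : (0:ℝ) ≤ ‖J‖ := norm_nonneg _
  have hr : (0:ℝ) ≤ ‖y - x‖ := norm_nonneg _
  have hgxn : (0:ℝ) ≤ ‖gx‖ := norm_nonneg _
  have hχn : (0:ℝ) ≤ ‖χ‖ := norm_nonneg _
  have hsh : (0:ℝ) ≤ Real.sqrt h := Real.sqrt_nonneg _
  have hcontr : h * (‖J‖ * ((L : ℝ) * (‖y - x‖ / 2))) ≤ ‖y - x‖ / 2 := by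
    have h1 : h * ‖J‖ * (L : ℝ) / 2 * ‖y - x‖ ≤ 1 / 2 * ‖y - x‖ :=
      mul_le_mul_of_nonneg_right hcond hr
    have e : h * (‖J‖ * ((L : ℝ) * (‖y - x‖ / 2)))
        = h * ‖J‖ * (L : ℝ) / 2 * ‖y - x‖ := by ring
    linarith
  have hgall : h * (‖J‖ * ‖g‖) ≤ h * (‖J‖ * ‖gx‖) + ‖y - x‖ / 2 := by
    have h1 : h * ‖J‖ * ‖g‖ ≤ h * ‖J‖ * (‖gx‖ + (L : ℝ) * (‖y - x‖ / 2)) :=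
      mul_le_mul_of_nonneg_left hgbound (mul_nonneg hh.le hJn)
    have e : h * ‖J‖ * (‖gx‖ + (L : ℝ) * (‖y - x‖ / 2))
        = h * (‖J‖ * ‖gx‖) + h * (‖J‖ * ((L : ℝ) * (‖y - x‖ / 2))) := by ring
    have e2 : h * ‖J‖ * ‖g‖ = h * (‖J‖ * ‖g‖) := by ring
    linarith
  have hsχ : s * ‖χ‖ ≤ 2 * (Real.sqrt h * ‖χ‖) := by
    have := mul_le_mul_of_nonneg_right hsqrt hχn
    linarith
  have e3 : (2 * ‖J‖ + 4) * (h * ‖gx‖ + Real.sqrt h * ‖χ‖)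
      = 2 * (h * (‖J‖ * ‖gx‖)) + 2 * (‖J‖ * (Real.sqrt h * ‖χ‖))
        + 4 * (h * ‖gx‖) + 4 * (Real.sqrt h * ‖χ‖) := by ring
  have n1 : (0:ℝ) ≤ ‖J‖ * (Real.sqrt h * ‖χ‖) :=
    mul_nonneg hJn (mul_nonneg hsh hχn)
  have n2 : (0:ℝ) ≤ h * ‖gx‖ := mul_nonneg hh.le hgxn
  linarith
end

section
/- Let U : ℝᵈ → ℝ be differentiable with ∇U Lipschitz with constant L, J a matrix, ξ ∈ {-1,1}, h > 0 with h‖J‖L/2 ≤ 1/2, and x, χ ∈ ℝᵈ. Let y be the unique solution of y + hξJ∇U((x+y)/2) = x - h∇U(x) + √(2h)χ. Then there exists C > 0, depending only on L and ‖J‖ and not on x, χ, h, such that ‖∇U(y)‖ ≤ (1 + Ch)‖∇U(x)‖ + C√(2h)‖χ‖. -/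
/-!
Writing `r = ‖y - x‖`, the step equation and the Lipschitz bound at the midpoint give
`r ≤ h‖∇U x‖ + √(2h)‖χ‖ + h‖J‖(‖∇U x‖ + L r / 2)`; the step-size condition makes the
coefficient of `r` on the right at most `1/2`, so `r = O(h‖∇U x‖ + √(2h)‖χ‖)`, and one more
Lipschitz estimate transfers this to `‖∇U y‖`.
-/

open NNReal

theorem LipschitzWith.norm_le_norm_add_mul_norm_sub {α F : Type*} [SeminormedAddCommGroup α]
    [SeminormedAddCommGroup F] {K : ℝ≥0} {f : α → F} (hf : LipschitzWith K f) (x y : α) :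
    ‖f y‖ ≤ ‖f x‖ + K * ‖y - x‖ :=
  (norm_le_norm_add_norm_sub' (f y) (f x)).trans (by gcongr; exact hf.norm_sub_le y x)

section ImplicitMidpointStep

variable {E : Type*} [NormedAddCommGroup E] [NormedSpace ℝ E]

theorem norm_sub_le_of_implicit_midpoint_step {G : E → E} {K : ℝ≥0} (hG : LipschitzWith K G)
    (A : E →L[ℝ] E) {h : ℝ} (hh : 0 ≤ h) (hsmall : h * ‖A‖ * K ≤ 1) {x y v : E}
    (hstep : y + h • A (G ((2 : ℝ)⁻¹ • (x + y))) = x - h • G x + v) :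
    ‖y - x‖ ≤ 2 * (h * (‖A‖ + 1) * ‖G x‖ + ‖v‖) := by
  set m := (2 : ℝ)⁻¹ • (x + y)
  have hdisp : y - x = v - h • G x - h • A (G m) := by
    linear_combination (norm := module) hstep
  have hmid : ‖G m‖ ≤ ‖G x‖ + K * (‖y - x‖ / 2) := by
    have hm : m - x = (2 : ℝ)⁻¹ • (y - x) := by module
    simpa [hm, norm_smul, div_eq_inv_mul] using hG.norm_le_norm_add_mul_norm_sub x m
  have htri : ‖y - x‖ ≤ ‖v‖ + h * ‖G x‖ + h * (‖A‖ * ‖G m‖) := by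
    calc ‖y - x‖ ≤ ‖v‖ + ‖h • G x‖ + ‖h • A (G m)‖ :=
          hdisp ▸ norm_sub_le_of_le (norm_sub_le _ _) le_rfl
      _ ≤ ‖v‖ + h * ‖G x‖ + h * (‖A‖ * ‖G m‖) := by
          rw [norm_smul_of_nonneg hh, norm_smul_of_nonneg hh]
          gcongr
          exact A.le_opNorm _
  have habsorb : h * (‖A‖ * ‖G m‖) ≤ h * ‖A‖ * ‖G x‖ + ‖y - x‖ / 2 := by
    calc h * (‖A‖ * ‖G m‖) ≤ h * (‖A‖ * (‖G x‖ + K * (‖y - x‖ / 2))) := by gcongr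
      _ = h * ‖A‖ * ‖G x‖ + h * ‖A‖ * K * (‖y - x‖ / 2) := by ring
      _ ≤ h * ‖A‖ * ‖G x‖ + 1 * (‖y - x‖ / 2) := by gcongr
      _ = h * ‖A‖ * ‖G x‖ + ‖y - x‖ / 2 := by ring
  linarith

end ImplicitMidpointStep

theorem implicit_step_gradient_bound_general (d : ℕ) (L : NNReal)
    (U : EuclideanSpace ℝ (Fin d) → ℝ)
    (hLip : LipschitzWith L (gradient U))
    (J : EuclideanSpace ℝ (Fin d) →L[ℝ] EuclideanSpace ℝ (Fin d)) :
    ∃ C > 0, ∀ (ξ : ℝ), (ξ = 1 ∨ ξ = -1) →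
      ∀ (h : ℝ), 0 < h → h * ‖J‖ * L / 2 ≤ 1 / 2 →
      ∀ (x χ y : EuclideanSpace ℝ (Fin d)),
        y + (h * ξ) • J (gradient U ((2 : ℝ)⁻¹ • (x + y)))
          = x - h • gradient U x + Real.sqrt (2 * h) • χ →
        ‖gradient U y‖ ≤ (1 + C * h) * ‖gradient U x‖
          + C * Real.sqrt (2 * h) * ‖χ‖ := by
  refine ⟨2 * (L + 1) * (‖J‖ + 1), by positivity, ?_⟩
  intro ξ hξ h hh hsmall x χ y hstep
  have hξJ : ‖ξ • J‖ = ‖J‖ := by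
    rw [norm_smul]; rcases hξ with rfl | rfl <;> simp
  have hstep' : y + h • (ξ • J) (gradient U ((2 : ℝ)⁻¹ • (x + y)))
      = x - h • gradient U x + Real.sqrt (2 * h) • χ := by
    rwa [_root_.smul_apply, smul_smul]
  have hdisp := norm_sub_le_of_implicit_midpoint_step hLip (ξ • J) hh.le
    (by rw [hξJ]; linarith) hstep'
  rw [hξJ, norm_smul_of_nonneg (Real.sqrt_nonneg _)] at hdisp
  calc ‖gradient U y‖ ≤ ‖gradient U x‖ + L * ‖y - x‖ :=
        hLip.norm_le_norm_add_mul_norm_sub x y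
    _ ≤ ‖gradient U x‖ + L * (2 * (h * (‖J‖ + 1) * ‖gradient U x‖
          + Real.sqrt (2 * h) * ‖χ‖)) := by gcongr
    _ = ‖gradient U x‖ + 2 * L * (‖J‖ + 1) * h * ‖gradient U x‖
          + 2 * L * 1 * Real.sqrt (2 * h) * ‖χ‖ := by ring
    _ ≤ ‖gradient U x‖ + 2 * (L + 1) * (‖J‖ + 1) * h * ‖gradient U x‖
          + 2 * (L + 1) * (‖J‖ + 1) * Real.sqrt (2 * h) * ‖χ‖ := by
        gcongr <;> linarith [norm_nonneg J]
    _ = _ := by ring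

theorem implicit_step_gradient_bound (d : ℕ) (L : NNReal)
    (U : EuclideanSpace ℝ (Fin d) → ℝ) (hU : Differentiable ℝ U)
    (hLip : LipschitzWith L (gradient U))
    (J : EuclideanSpace ℝ (Fin d) →L[ℝ] EuclideanSpace ℝ (Fin d)) :
    ∃ C > 0, ∀ (ξ : ℝ), (ξ = 1 ∨ ξ = -1) →
      ∀ (h : ℝ), 0 < h → h * ‖J‖ * L / 2 ≤ 1 / 2 →
      ∀ (x χ y : EuclideanSpace ℝ (Fin d)),
        y + (h * ξ) • J (gradient U ((2 : ℝ)⁻¹ • (x + y)))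
          = x - h • gradient U x + Real.sqrt (2 * h) • χ →
        ‖gradient U y‖ ≤ (1 + C * h) * ‖gradient U x‖
          + C * Real.sqrt (2 * h) * ‖χ‖ :=
  implicit_step_gradient_bound_general d L U hLip J
end

section
/- Let E be a measurable space, S : E → E a measurable involution with S preserving a probability measure π, and let Q(x,·) = δ_{Φ(x)} be the deterministic proposal given by a measurable bijection Φ : E → E. Suppose Φ and S satisfy S∘Φ∘S = Φ⁻¹. Define the Markov kernel P by: from x, move to Φ(x) with probability α(x) = min(1, π∘Φ(x)·w(x)/π(x)) and otherwise move to S(x), where w is the Jacobian weight making π(dΦ(x))·w(x) the correct Radon–Nikodym factor; assume Φ preserves the reference measure (w ≡ 1) so α(x) = min(1, e^{U(x) - U(Φ(x))}) with π ∝ e^{-U}. Then P satisfies the skew detailed balance π(dx)P(x,dy) = π(dy)P(S(y),S(dx)), and hence leaves π invariant. -/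
/-!
The kernel splits into a move part `α(x) δ_{Φ x}` and a flip part `(1 - α(x)) δ_{S x}`.
The flip part is skew-balanced because `S` is a `π`-preserving involution. For the move part,
substitute `y = Φ x`, which preserves `μ`; the Metropolis weight makes the flux symmetric,
`α(x) e^{-U x} = min (e^{-U x}) (e^{-U (Φ x)}) = α(S (Φ x)) e^{-U (Φ x)}`,
since `U ∘ S = U` and `Φ ∘ S ∘ Φ = S`. Invariance is the case `A = univ`, as `P(x, univ) = 1`.
-/

open MeasureTheory
open scoped ENNReal

lemma Real.min_one_exp_sub_mul_exp_neg (u v : ℝ) :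
    min 1 (Real.exp (u - v)) * Real.exp (-u) = min (Real.exp (-u)) (Real.exp (-v)) := by
  rw [min_mul_of_nonneg _ _ (Real.exp_nonneg _), one_mul, ← Real.exp_add]
  ring_nf

lemma Real.min_one_exp_sub_mul_exp_neg_comm (c u v : ℝ) :
    min 1 (Real.exp (u - v)) * (c * Real.exp (-u)) =
      min 1 (Real.exp (v - u)) * (c * Real.exp (-v)) := by
  rw [mul_left_comm, Real.min_one_exp_sub_mul_exp_neg, mul_left_comm,
    Real.min_one_exp_sub_mul_exp_neg, min_comm]

lemma mul_indicator_one_comp {E : Type*} (g : E → ℝ≥0∞) (Φ : E → E) (B : Set E) (x : E) :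
    g x * B.indicator (fun _ => 1) (Φ x) = (Φ ⁻¹' B).indicator g x := by
  by_cases hx : Φ x ∈ B <;> simp [hx]

noncomputable def hybridKernel {E : Type*} (Φ S : E → E) (a : E → ℝ≥0∞) (x : E) (B : Set E) :
    ℝ≥0∞ :=
  a x * B.indicator (fun _ => 1) (Φ x) + (1 - a x) * B.indicator (fun _ => 1) (S x)

lemma hybridKernel_univ {E : Type*} (Φ S : E → E) {a : E → ℝ≥0∞} {x : E} (ha : a x ≤ 1) :
    hybridKernel Φ S a x Set.univ = 1 := by
  simp [hybridKernel, ha]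

section

variable {E : Type*} [MeasurableSpace E]

lemma MeasureTheory.MeasurePreserving.setLIntegral_mul_indicator_comp {ν : Measure E}
    {Φ Ψ : E → E} (hΦ : MeasurePreserving Φ ν ν) (hΨ : Measurable Ψ)
    (hΨΦ : Function.LeftInverse Ψ Φ) {g : E → ℝ≥0∞} (hg : Measurable g) {A B : Set E}
    (hA : MeasurableSet A) (hB : MeasurableSet B) :
    ∫⁻ x in A, g x * B.indicator (fun _ => 1) (Φ x) ∂ν =
      ∫⁻ y in B, g (Ψ y) * A.indicator (fun _ => 1) (Ψ y) ∂ν := by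
  have hpre : Φ ⁻¹' (B ∩ Ψ ⁻¹' A) = Φ ⁻¹' B ∩ A := by
    ext x; simp [hΨΦ x]
  simp_rw [mul_indicator_one_comp _ Φ B, mul_indicator_one_comp (fun y => g (Ψ y)) Ψ A]
  rw [setLIntegral_indicator (hB.preimage hΦ.measurable),
    setLIntegral_indicator (hA.preimage hΨ), Set.inter_comm _ B, ← hpre,
    ← hΦ.setLIntegral_comp_preimage (f := fun y => g (Ψ y)) (hB.inter (hA.preimage hΨ))
      (hg.comp hΨ)]
  simp only [hΨΦ _]

lemma MeasureTheory.MeasurePreserving.setLIntegral_withDensity_mul_indicator_comp {μ : Measure E}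
    {Φ Ψ : E → E} (hΦ : MeasurePreserving Φ μ μ) (hΨ : Measurable Ψ)
    (hΨΦ : Function.LeftInverse Ψ Φ) (hΦΨ : Function.RightInverse Ψ Φ)
    {f a b : E → ℝ≥0∞} (hf : Measurable f) (ha : Measurable a) (hb : Measurable b)
    (hflux : ∀ x, a x * f x = b (Φ x) * f (Φ x)) {A B : Set E} (hA : MeasurableSet A)
    (hB : MeasurableSet B) :
    ∫⁻ x in A, a x * B.indicator (fun _ => 1) (Φ x) ∂μ.withDensity f =
      ∫⁻ y in B, b y * A.indicator (fun _ => 1) (Ψ y) ∂μ.withDensity f := by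
  rw [setLIntegral_withDensity_eq_setLIntegral_mul _ hf
      (g := fun x => a x * B.indicator (fun _ => 1) (Φ x))
      (ha.mul ((measurable_const.indicator hB).comp hΦ.measurable)) hA,
    setLIntegral_withDensity_eq_setLIntegral_mul _ hf
      (g := fun y => b y * A.indicator (fun _ => 1) (Ψ y))
      (hb.mul ((measurable_const.indicator hA).comp hΨ)) hB]
  simp only [Pi.mul_apply, ← mul_assoc]
  rw [hΦ.setLIntegral_mul_indicator_comp (g := fun x => f x * a x) hΨ hΨΦ (hf.mul ha) hA hB]
  congr 1 with y
  rw [mul_comm (f _), hflux, hΦΨ y, mul_comm (b y)]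

lemma lintegral_eq_of_skew_detailed_balance {π : Measure E} {S : E → E}
    {P : E → Set E → ℝ≥0∞}
    (hbal : ∀ A B : Set E, MeasurableSet A → MeasurableSet B →
      ∫⁻ x in A, P x B ∂π = ∫⁻ y in B, P (S y) (S ⁻¹' A) ∂π)
    (hP : ∀ x, P x Set.univ = 1) {B : Set E} (hB : MeasurableSet B) :
    ∫⁻ x, P x B ∂π = π B := by
  have h := hbal Set.univ B MeasurableSet.univ hB
  rw [Measure.restrict_univ] at h
  simp [h, hP]

lemma hybridKernel_skew_detailed_balance {μ : Measure E} {f a : E → ℝ≥0∞} {Φ Ψ S : E → E}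
    (hf : Measurable f) (ha : Measurable a)
    (hS : MeasurePreserving S (μ.withDensity f) (μ.withDensity f)) (hSS : Function.Involutive S)
    (hΦ : MeasurePreserving Φ μ μ) (hΨ : Measurable Ψ) (hΨΦ : Function.LeftInverse Ψ Φ)
    (hΦΨ : Function.RightInverse Ψ Φ) (hΦS : ∀ x, Φ (S x) = S (Ψ x))
    (hflux : ∀ x, a x * f x = a (S (Φ x)) * f (Φ x)) {A B : Set E} (hA : MeasurableSet A)
    (hB : MeasurableSet B) :
    ∫⁻ x in A, hybridKernel Φ S a x B ∂μ.withDensity f =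
      ∫⁻ y in B, hybridKernel Φ S a (S y) (S ⁻¹' A) ∂μ.withDensity f := by
  have hmove := hΦ.setLIntegral_withDensity_mul_indicator_comp (b := fun y => a (S y)) hΨ hΨΦ
    hΦΨ hf ha (ha.comp hS.measurable) hflux hA hB
  have hflip := hS.setLIntegral_mul_indicator_comp (g := fun x => 1 - a x) hS.measurable
    hSS.leftInverse (measurable_const.sub ha) hA hB
  have hpre : ∀ z, (S ⁻¹' A).indicator (fun _ => (1 : ℝ≥0∞)) z = A.indicator (fun _ => 1) (S z) :=
    fun _ => Set.indicator_comp_right (g := fun _ => 1) S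
  have hΦmeas := hΦ.measurable
  have hSmeas := hS.measurable
  simp only [hybridKernel, hpre, hΦS, hSS _]
  rw [lintegral_add_left (by measurability), lintegral_add_left (by measurability), hmove, hflip]

end

theorem hybrid_step_skew_detailed_balance_and_invariant_general
    {E : Type*} [MeasurableSpace E] (μ : Measure E)
    (U : E → ℝ) (hUmeas : Measurable U)
    (c : ℝ)
    (π : Measure E)
    (hπ : π = μ.withDensity (fun x => ENNReal.ofReal (c * Real.exp (-U x))))
    (S : E → E) (hSmeas : Measurable S) (hSinv : ∀ x, S (S x) = x)
    (hSπ : Measure.map S π = π)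
    (hUS : ∀ x, U (S x) = U x)
    (Φ Ψ : E → E) (hΦmeas : Measurable Φ) (hΨmeas : Measurable Ψ)
    (hΦΨ : ∀ x, Ψ (Φ x) = x) (hΨΦ : ∀ x, Φ (Ψ x) = x)
    (hΦμ : Measure.map Φ μ = μ)
    (hrev : ∀ x, S (Φ (S x)) = Ψ x)
    (α : E → ℝ)
    (hα : ∀ x, α x = min 1 (Real.exp (U x - U (Φ x))))
    (P : E → Set E → ENNReal)
    (hP : ∀ x B, P x B =
      ENNReal.ofReal (α x) * B.indicator (fun _ => (1 : ENNReal)) (Φ x) +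
      (1 - ENNReal.ofReal (α x)) * B.indicator (fun _ => (1 : ENNReal)) (S x)) :
    (∀ A B : Set E, MeasurableSet A → MeasurableSet B →
      ∫⁻ x in A, P x B ∂π = ∫⁻ y in B, P (S y) (S ⁻¹' A) ∂π) ∧
    (∀ B : Set E, MeasurableSet B → ∫⁻ x, P x B ∂π = π B) := by
  subst hπ
  set a : E → ℝ≥0∞ := fun x => ENNReal.ofReal (α x) with ha_def
  obtain rfl : P = hybridKernel Φ S a := funext fun x => funext (hP x)
  have hΦSΦ : ∀ x, Φ (S (Φ x)) = S x := fun x => by rw [← hSinv (Φ _), hrev, hΦΨ]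
  have hΦS : ∀ x, Φ (S x) = S (Ψ x) := fun x => by rw [← hrev, hSinv]
  have hαmeas : Measurable α := by
    rw [funext hα]
    exact measurable_const.min (hUmeas.sub (hUmeas.comp hΦmeas)).exp
  have hflux : ∀ x, a x * ENNReal.ofReal (c * Real.exp (-U x)) =
      a (S (Φ x)) * ENNReal.ofReal (c * Real.exp (-U (Φ x))) := fun x => by
    simp only [ha_def, hα, hΦSΦ, hUS]
    rw [← ENNReal.ofReal_mul (by positivity), ← ENNReal.ofReal_mul (by positivity),
      Real.min_one_exp_sub_mul_exp_neg_comm]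
  have hbal := fun A B => hybridKernel_skew_detailed_balance (A := A) (B := B)
    (hUmeas.neg.exp.const_mul c).ennreal_ofReal hαmeas.ennreal_ofReal ⟨hSmeas, hSπ⟩
    hSinv ⟨hΦmeas, hΦμ⟩ hΨmeas hΦΨ hΨΦ hΦS hflux
  refine ⟨hbal, fun B hB => lintegral_eq_of_skew_detailed_balance hbal (fun x => ?_) hB⟩
  exact hybridKernel_univ Φ S (ENNReal.ofReal_le_one.mpr ((hα x).trans_le (min_le_left _ _)))

theorem hybrid_step_skew_detailed_balance_and_invariant
    {E : Type*} [MeasurableSpace E] (μ : Measure E) [SigmaFinite μ]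
    (U : E → ℝ) (hUmeas : Measurable U)
    (c : ℝ) (hc : 0 < c)
    (π : Measure E) [IsProbabilityMeasure π]
    (hπ : π = μ.withDensity (fun x => ENNReal.ofReal (c * Real.exp (-U x))))
    (S : E → E) (hSmeas : Measurable S) (hSinv : ∀ x, S (S x) = x)
    (hSπ : Measure.map S π = π) (hSμ : Measure.map S μ = μ)
    (hUS : ∀ x, U (S x) = U x)
    (Φ Ψ : E → E) (hΦmeas : Measurable Φ) (hΨmeas : Measurable Ψ)
    (hΦΨ : ∀ x, Ψ (Φ x) = x) (hΨΦ : ∀ x, Φ (Ψ x) = x)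
    (hΦμ : Measure.map Φ μ = μ)
    (hrev : ∀ x, S (Φ (S x)) = Ψ x)
    (α : E → ℝ)
    (hα : ∀ x, α x = min 1 (Real.exp (U x - U (Φ x))))
    (P : E → Set E → ENNReal)
    (hP : ∀ x B, P x B =
      ENNReal.ofReal (α x) * B.indicator (fun _ => (1 : ENNReal)) (Φ x) +
      (1 - ENNReal.ofReal (α x)) * B.indicator (fun _ => (1 : ENNReal)) (S x)) :
    (∀ A B : Set E, MeasurableSet A → MeasurableSet B →
      ∫⁻ x in A, P x B ∂π = ∫⁻ y in B, P (S y) (S ⁻¹' A) ∂π) ∧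
    (∀ B : Set E, MeasurableSet B → ∫⁻ x, P x B ∂π = π B) :=
  hybrid_step_skew_detailed_balance_and_invariant_general μ U hUmeas c π hπ S hSmeas hSinv hSπ hUS Φ
    Ψ hΦmeas hΨmeas hΦΨ hΨΦ hΦμ hrev α hα P hP
end

section
/- Let A and S be n×n real matrices with A skew-symmetric and S symmetric positive semidefinite, and let h ≥ 0. Then det(I + h·A·S) ≥ 1; in particular det(I + h·A·S) > 0. -/
/-! Write `S = Bᵀ B`. By the Weinstein–Aronszajn identity
`det (1 + h A S) = det (1 + B (h A) Bᵀ)`, and `B (h A) Bᵀ` is skew-symmetric. For skew-symmetric `K`, `(1 + K) (1 + K)ᵀ = 1 + K Kᵀ` with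
`K Kᵀ` positive semidefinite, so `det (1 + K) ^ 2 ≥ 1`. As `t ↦ det (1 + t K)` is continuous,
never zero and equal to `1` at `t = 0`, `det (1 + K)` is positive, hence at least `1`. -/

open Matrix

namespace Matrix

theorem transpose_mul_mul_transpose_eq_neg {m n R : Type*} [Fintype n] [CommRing R]
    {K : Matrix n n R} (hK : Kᵀ = -K) (B : Matrix m n R) :
    (B * K * Bᵀ)ᵀ = -(B * K * Bᵀ) := by
  rw [transpose_mul, transpose_mul, transpose_transpose, hK, Matrix.neg_mul, Matrix.mul_neg,
    Matrix.mul_assoc]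

variable {ι : Type*} [Fintype ι] [DecidableEq ι]

theorem PosSemidef.one_le_det_one_add {P : Matrix ι ι ℝ} (hP : P.PosSemidef) :
    1 ≤ (1 + P).det := by
  have hH : (1 + P).IsHermitian := isHermitian_one.add hP.isHermitian
  rw [hH.det_eq_prod_eigenvalues]
  refine Finset.one_le_prod fun i _ ↦ ?_
  have hmem : (hH.eigenvalues i - 1) + 1 ∈ spectrum ℝ (algebraMap ℝ _ 1 + P) := by
    simpa using hH.eigenvalues_mem_spectrum_real i
  have := (posSemidef_iff_isHermitian_and_spectrum_nonneg.mp hP).2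
    (spectrum.add_mem_add_iff.mp hmem)
  simp only [Set.mem_ofPred_eq, sub_nonneg, Real.ringHom_apply, ge_iff_le] at this ⊢
  linarith

theorem one_le_det_one_add_sq_of_transpose_eq_neg {K : Matrix ι ι ℝ} (hK : Kᵀ = -K) :
    1 ≤ (1 + K).det ^ 2 := by
  have hKKt : (K * Kᵀ).PosSemidef := by
    simpa [conjTranspose_eq_transpose_of_trivial] using posSemidef_self_mul_conjTranspose K
  calc 1 ≤ (1 + K * Kᵀ).det := hKKt.one_le_det_one_add
    _ = ((1 + K) * (1 + K)ᵀ).det := by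
      rw [transpose_add, transpose_one, hK]; noncomm_ring
    _ = (1 + K).det ^ 2 := by rw [det_mul, det_transpose, sq]

theorem one_le_det_one_add_of_transpose_eq_neg {K : Matrix ι ι ℝ} (hK : Kᵀ = -K) :
    1 ≤ (1 + K).det := by
  have hsq (t : ℝ) : 1 ≤ (1 + t • K).det ^ 2 :=
    one_le_det_one_add_sq_of_transpose_eq_neg (by rw [transpose_smul, hK, smul_neg])
  have hcont : Continuous fun t : ℝ ↦ (1 + t • K).det := by fun_prop
  have hne (t : ℝ) : (1 + t • K).det ≠ 0 := fun h0 ↦ absurd (hsq t) (by simp [h0])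
  have hpos : 0 < (1 + K).det := by
    by_contra! hle
    obtain ⟨t, ht⟩ := intermediate_value_univ 1 0 hcont ⟨by simpa using hle, by simp⟩
    exact hne t ht
  nlinarith [one_le_det_one_add_sq_of_transpose_eq_neg hK]

open scoped MatrixOrder in
theorem one_le_det_one_add_mul_of_transpose_eq_neg {K S : Matrix ι ι ℝ} (hK : Kᵀ = -K)
    (hS : S.PosSemidef) :
    1 ≤ (1 + K * S).det := by
  obtain ⟨B, rfl⟩ := CStarAlgebra.nonneg_iff_eq_star_mul_self.mp hS.nonneg
  rw [star_eq_conjTranspose, conjTranspose_eq_transpose_of_trivial, ← Matrix.mul_assoc,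
    det_one_add_mul_comm, ← Matrix.mul_assoc]
  exact one_le_det_one_add_of_transpose_eq_neg (transpose_mul_mul_transpose_eq_neg hK B)

end Matrix

theorem det_one_add_smul_skew_mul_psd_general (n : ℕ) (A S : Matrix (Fin n) (Fin n) ℝ)
    (hA : A.transpose = -A) (hS : S.PosSemidef) (h : ℝ) :
    1 ≤ (1 + h • (A * S)).det ∧ 0 < (1 + h • (A * S)).det := by
  have hone : 1 ≤ (1 + h • A * S).det :=
    one_le_det_one_add_mul_of_transpose_eq_neg (by rw [transpose_smul, hA, smul_neg]) hS
  rw [smul_mul] at hone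
  exact ⟨hone, one_pos.trans_le hone⟩

theorem det_one_add_smul_skew_mul_psd (n : ℕ) (A S : Matrix (Fin n) (Fin n) ℝ)
    (hA : A.transpose = -A) (hS : S.PosSemidef) (h : ℝ) (hh : 0 ≤ h) :
    1 ≤ (1 + h • (A * S)).det ∧ 0 < (1 + h • (A * S)).det :=
  det_one_add_smul_skew_mul_psd_general n A S hA hS h
end

section
/- Let π be a probability measure on a measurable space E, S : E → E a π-preserving measurable involution, Q a Markov kernel on E admitting a density q(x,y) with respect to a reference measure μ with π ≪ μ having density p, and define the generalized Metropolis–Hastings kernel: from x propose y ∼ Q(x,·), accept with probability α(x,y) = min(1, p(y)q(S(y),S(x)) / (p(x)q(x,y))) (set α = 1 when the denominator vanishes), moving to y on acceptance and to S(x) on rejection. Then the resulting kernel P leaves π invariant. -/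
/-!
Weighted by the density `ρ = p` of `π`, the accepted moves carry the flux
`m x y = min (ρ x q(x,y)) (ρ y q(S y, S x))`, which satisfies the skew detailed balance
`m (S x) (S y) = m y x`. By Tonelli, the accepted mass entering `B` is the inflow `∫ m y x dy`
integrated over `B`. The rejected mass `ρ x - ∫ m x y dy` lands in `B` exactly when `S x ∈ B`, and
the change of variables `x ↦ S x` together with skew detailed balance turns it into `ρ - inflow`
integrated over `B`. The two add up to `∫_B ρ = π B`.
-/

open Function
open scoped ENNReal

lemma mul_ite_min_one_div {a b : ℝ} (ha : 0 ≤ a) (hb : 0 ≤ b) :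
    a * (if a = 0 then 1 else min 1 (b / a)) = min a b := by
  split_ifs with h0
  · rw [h0, mul_one, min_eq_left hb]
  · rw [mul_min_of_nonneg _ _ ha, mul_one, mul_div_cancel₀ _ h0]

namespace MeasureTheory

variable {E : Type*} {S : E → E}

/-- `ρ x * Q x y * α x y` written without the division in `α`: the density of the accepted
transitions `x → y`. -/
noncomputable def liftedFlux (S : E → E) (ρ : E → ℝ≥0∞) (Q : E → E → ℝ≥0∞) (x y : E) : ℝ≥0∞ :=
  min (ρ x * Q x y) (ρ y * Q (S y) (S x))

lemma liftedFlux_apply_apply {ρ : E → ℝ≥0∞} {Q : E → E → ℝ≥0∞} (hS : Involutive S)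
    (hρS : ∀ x, ρ (S x) = ρ x) (x y : E) :
    liftedFlux S ρ Q (S x) (S y) = liftedFlux S ρ Q y x := by
  simp only [liftedFlux, hS x, hS y, hρS, min_comm]

variable [MeasurableSpace E] {μ : Measure E}

lemma lintegral_liftedFlux_le {ρ : E → ℝ≥0∞} {Q : E → E → ℝ≥0∞} {x : E} (hρ : ρ x ≠ ∞) :
    ∫⁻ y, liftedFlux S ρ Q x y ∂μ ≤ ρ x * ∫⁻ y, Q x y ∂μ :=
  (lintegral_mono fun _ ↦ min_le_left _ _).trans_eq (lintegral_const_mul' _ _ hρ)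

lemma measurable_liftedFlux {ρ : E → ℝ≥0∞} {Q : E → E → ℝ≥0∞} (hS : Measurable S)
    (hρ : Measurable ρ) (hQ : Measurable (uncurry Q)) :
    Measurable (uncurry (liftedFlux S ρ Q)) :=
  ((hρ.comp measurable_fst).mul hQ).min
    ((hρ.comp measurable_snd).mul
      (hQ.comp ((hS.comp measurable_snd).prodMk (hS.comp measurable_fst))))

lemma mul_setLIntegral_add_indicator_one_sub {r : ℝ≥0∞} (hr : r ≠ ∞) (w : E → ℝ≥0∞)
    (B : Set E) (z : E) :
    r * ((∫⁻ y in B, w y ∂μ) + B.indicator (fun _ ↦ 1 - ∫⁻ y, w y ∂μ) z) =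
      (∫⁻ y in B, r * w y ∂μ) + B.indicator (fun _ ↦ r - ∫⁻ y, r * w y ∂μ) z := by
  rw [mul_add, ← Set.indicator_const_mul, lintegral_const_mul' r _ hr,
    lintegral_const_mul' r _ hr, ENNReal.mul_sub fun _ _ ↦ hr, mul_one]

/-- The integrand is `ρ x` times the generalized Metropolis–Hastings kernel whose accepted
transitions have density `m`. -/
theorem lintegral_accepted_add_rejected [SFinite μ] (hS : MeasurePreserving S μ μ)
    (hSinv : Involutive S) {ρ : E → ℝ≥0∞} (hρS : ∀ x, ρ (S x) = ρ x) {m : E → E → ℝ≥0∞}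
    (hm : Measurable (uncurry m)) (hmS : ∀ x y, m (S x) (S y) = m y x)
    (hmρ : ∀ x, ∫⁻ y, m x y ∂μ ≤ ρ x) {B : Set E} (hB : MeasurableSet B) :
    ∫⁻ x, ((∫⁻ y in B, m x y ∂μ) + B.indicator (fun _ ↦ ρ x - ∫⁻ y, m x y ∂μ) (S x)) ∂μ =
      ∫⁻ x in B, ρ x ∂μ := by
  have hSe : MeasurableEmbedding S :=
    (MeasurableEquiv.ofInvolutive S hSinv hS.measurable).measurableEmbedding
  set inflow : E → ℝ≥0∞ := fun y ↦ ∫⁻ x, m x y ∂μ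
  have hinflow : Measurable inflow := (hm.comp measurable_swap).lintegral_prod_right'
  have hinflow_comp : ∀ x, inflow (S x) = ∫⁻ y, m x y ∂μ := fun x ↦
    (hS.lintegral_comp_emb hSe (m · (S x))).symm.trans (lintegral_congr fun y ↦ hmS y x)
  have hinflow_le : ∀ x, inflow x ≤ ρ x := fun x ↦ by
    simpa only [← hinflow_comp, hSinv x, hρS] using hmρ (S x)
  have haccepted : Measurable fun x ↦ ∫⁻ y in B, m x y ∂μ := hm.lintegral_prod_right'
  calc _ = (∫⁻ x, ∫⁻ y in B, m x y ∂μ ∂μ) + ∫⁻ x in S ⁻¹' B, ρ x - ∫⁻ y, m x y ∂μ ∂μ := by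
        rw [← lintegral_indicator (hS.measurable hB), ← lintegral_add_left haccepted]
        rfl
    _ = (∫⁻ y in B, inflow y ∂μ) + ∫⁻ y in B, ρ y - inflow y ∂μ := by
        congr 1
        · exact lintegral_lintegral_swap hm.aemeasurable
        · rw [← hS.setLIntegral_comp_preimage_emb hSe (fun y ↦ ρ y - inflow y)]
          simp only [hinflow_comp, hρS]
    _ = ∫⁻ x in B, ρ x ∂μ := by
        rw [← lintegral_add_left hinflow]
        exact setLIntegral_congr_fun hB fun x _ ↦ add_tsub_cancel_of_le (hinflow_le x)

end MeasureTheory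

open MeasureTheory

theorem generalized_metropolis_hastings_invariant_general
    {E : Type*} [MeasurableSpace E] (μ : Measure E) [SigmaFinite μ]
    (p : E → ℝ) (hp : ∀ x, 0 ≤ p x) (hpmeas : Measurable p)
    (π : Measure E)
    (hπ : π = μ.withDensity (fun x => ENNReal.ofReal (p x)))
    (S : E → E) (hSmeas : Measurable S) (hSinv : ∀ x, S (S x) = x)
    (hSμ : Measure.map S μ = μ) (hpS : ∀ x, p (S x) = p x)
    (q : E → E → ℝ) (hq : ∀ x y, 0 ≤ q x y)
    (hqmeas : Measurable fun z : E × E => q z.1 z.2)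
    (hqmarkov : ∀ x, ∫⁻ y, ENNReal.ofReal (q x y) ∂μ = 1)
    (α : E → E → ℝ)
    (hα : ∀ x y, α x y =
      if p x * q x y = 0 then 1
      else min 1 (p y * q (S y) (S x) / (p x * q x y)))
    (P : E → Set E → ENNReal)
    (hP : ∀ x B, P x B =
      (∫⁻ y in B, ENNReal.ofReal (q x y * α x y) ∂μ) +
      B.indicator
        (fun _ => 1 - ∫⁻ y, ENNReal.ofReal (q x y * α x y) ∂μ) (S x)) :
    ∀ B : Set E, MeasurableSet B → ∫⁻ x, P x B ∂π = π B := by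
  intro B hB
  set ρ : E → ℝ≥0∞ := fun x ↦ ENNReal.ofReal (p x)
  set m := liftedFlux S ρ fun x y ↦ ENNReal.ofReal (q x y)
  have hflux : ∀ x y, ρ x * ENNReal.ofReal (q x y * α x y) = m x y := fun x y ↦ by
    rw [← ENNReal.ofReal_mul (hp x), ← mul_assoc, hα, mul_ite_min_one_div
      (mul_nonneg (hp x) (hq x y)) (mul_nonneg (hp y) (hq _ _)), ENNReal.ofReal_min,
      ENNReal.ofReal_mul (hp x), ENNReal.ofReal_mul (hp y)]
    rfl
  have hkernel : ∀ x, ρ x * P x B =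
      (∫⁻ y in B, m x y ∂μ) + B.indicator (fun _ ↦ ρ x - ∫⁻ y, m x y ∂μ) (S x) := fun x ↦ by
    rw [hP, mul_setLIntegral_add_indicator_one_sub (r := ρ x) ENNReal.ofReal_ne_top]
    simp only [hflux]
  have hm_le : ∀ x, ∫⁻ y, m x y ∂μ ≤ ρ x := fun x ↦
    (lintegral_liftedFlux_le (ρ := ρ) ENNReal.ofReal_ne_top).trans_eq (by rw [hqmarkov, mul_one])
  have hρS : ∀ x, ρ (S x) = ρ x := fun x ↦ by simp only [ρ, hpS]
  calc ∫⁻ x, P x B ∂π = ∫⁻ x, ρ x * P x B ∂μ := by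
        rw [hπ, lintegral_withDensity_eq_lintegral_mul_non_measurable _
          hpmeas.ennreal_ofReal (ae_of_all _ fun _ ↦ ENNReal.ofReal_lt_top)]
        rfl
    _ = ∫⁻ x in B, ρ x ∂μ := by
        simp_rw [hkernel]
        exact lintegral_accepted_add_rejected ⟨hSmeas, hSμ⟩ hSinv hρS
          (measurable_liftedFlux (Q := fun x y ↦ ENNReal.ofReal (q x y)) hSmeas
            hpmeas.ennreal_ofReal hqmeas.ennreal_ofReal)
          (liftedFlux_apply_apply hSinv hρS) hm_le hB
    _ = π B := by rw [hπ, withDensity_apply _ hB]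

theorem generalized_metropolis_hastings_invariant
    {E : Type*} [MeasurableSpace E] (μ : Measure E) [SigmaFinite μ]
    (p : E → ℝ) (hp : ∀ x, 0 ≤ p x) (hpmeas : Measurable p)
    (π : Measure E) [IsProbabilityMeasure π]
    (hπ : π = μ.withDensity (fun x => ENNReal.ofReal (p x)))
    (S : E → E) (hSmeas : Measurable S) (hSinv : ∀ x, S (S x) = x)
    (hSμ : Measure.map S μ = μ) (hpS : ∀ x, p (S x) = p x)
    (q : E → E → ℝ) (hq : ∀ x y, 0 ≤ q x y)
    (hqmeas : Measurable fun z : E × E => q z.1 z.2)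
    (hqmarkov : ∀ x, ∫⁻ y, ENNReal.ofReal (q x y) ∂μ = 1)
    (α : E → E → ℝ)
    (hα : ∀ x y, α x y =
      if p x * q x y = 0 then 1
      else min 1 (p y * q (S y) (S x) / (p x * q x y)))
    (P : E → Set E → ENNReal)
    (hP : ∀ x B, P x B =
      (∫⁻ y in B, ENNReal.ofReal (q x y * α x y) ∂μ) +
      B.indicator
        (fun _ => 1 - ∫⁻ y, ENNReal.ofReal (q x y * α x y) ∂μ) (S x)) :
    ∀ B : Set E, MeasurableSet B → ∫⁻ x, P x B ∂π = π B :=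
  generalized_metropolis_hastings_invariant_general μ p hp hpmeas π hπ S hSmeas hSinv hSμ hpS q hq
    hqmeas hqmarkov α hα P hP
end
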